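/- arXiv:1603.08190 — 8 statements merged into one kernel-verified Lean document; each statement's English description precedes it below -/
import Mathlib

section
/- For a chronology violating class [r], one has I⁻(r) = I⁻([r]) = I⁻(closure([r])). -/
open Set Topology

section Chronology

variable {M : Type*} (ll : M → M → Prop)

theorem setOf_rel_eq_setOf_exists_rel_of_mem_of_subset
    (htrans : ∀ x y z, ll x y → ll y z → ll x z) {r : M} {S : Set M}
    (hrS : r ∈ S) (hS : S ⊆ {y | ll y r}) :
    {y | ll y r} = {y | ∃ z ∈ S, ll y z} := by
  ext y
  constructor
  · intro hy
    exact ⟨r, hrS, hy⟩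
  · rintro ⟨z, hzS, hyz⟩
    exact htrans y z r hyz (hS hzS)

theorem setOf_exists_mem_closure_rel_eq [TopologicalSpace M]
    (hfuture : ∀ y, IsOpen {w | ll y w}) (S : Set M) :
    {y | ∃ z ∈ closure S, ll y z} = {y | ∃ z ∈ S, ll y z} := by
  ext y
  constructor
  · rintro ⟨z, hz, hyz⟩
    obtain ⟨w, hyw, hwS⟩ := mem_closure_iff.mp hz _ (hfuture y) hyz
    exact ⟨w, hwS, hyw⟩
  · rintro ⟨z, hz, hyz⟩
    exact ⟨z, subset_closure hz, hyz⟩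

end Chronology

/-- For a chronology violating class `[r] = I⁺(r) ∩ I⁻(r)`,
`I⁻(r) = I⁻([r]) = I⁻(closure [r])`. -/
theorem Iminus_class_eq
    {M : Type*} [TopologicalSpace M] (ll : M → M → Prop)
    (htrans : ∀ x y z, ll x y → ll y z → ll x z)
    (hopen : IsOpen {p : M × M | ll p.1 p.2})
    (r : M) (hr : ll r r) :
    let cls : Set M := {y | ll r y} ∩ {y | ll y r}
    {y | ll y r} = {y | ∃ z ∈ cls, ll y z} ∧
    {y | ∃ z ∈ cls, ll y z} = {y | ∃ z ∈ closure cls, ll y z} := by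
  intro cls
  have hfuture : ∀ y, IsOpen {w | ll y w} := fun y => hopen.preimage (.prodMk_right y)
  exact ⟨setOf_rel_eq_setOf_exists_rel_of_mem_of_subset ll htrans ⟨hr, hr⟩ inter_subset_right,
    (setOf_exists_mem_closure_rel_eq ll hfuture cls).symm⟩
end

section
/- For a chronology violating class [r], the following four sets coincide: (i) closure([r]) \ I⁻([r]); (ii) boundary([r]) \ I⁻([r]); (iv) boundary([r]) ∩ ∂I⁻([r]). (Here (iv) uses the topological boundary of the open past set I⁻([r]).) -/
/-!
Since `≪` is open, `[r]` and `I⁻([r])` are open sets, and transitivity (`y ≪ r ≪ y`) gives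
`[r] ⊆ I⁻([r])`. For open sets `U ⊆ V` the identities are then pure topology:
`∂U = closure U \ U` and `∂V = closure V \ V ⊇ ∂U \ V`.
-/

open Set Topology

section Topology

variable {X : Type*} [TopologicalSpace X] {U V : Set X}

theorem closure_diff_eq_frontier_diff_of_subset (hU : IsOpen U) (hUV : U ⊆ V) :
    closure U \ V = frontier U \ V := by
  rw [hU.frontier_eq, sdiff_sdiff, union_eq_right.mpr hUV]

theorem frontier_diff_eq_frontier_inter_frontier (hV : IsOpen V) (hUV : U ⊆ V) :
    frontier U \ V = frontier U ∩ frontier V := by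
  rw [hV.frontier_eq, ← inter_sdiff_assoc,
    inter_eq_left.mpr (frontier_subset_closure.trans (closure_mono hUV))]

end Topology

section OpenRelation

variable {M : Type*} [TopologicalSpace M] {R : M → M → Prop}

theorem isOpen_setOf_rel_left (hR : IsOpen {p : M × M | R p.1 p.2}) (x : M) :
    IsOpen {y | R x y} :=
  hR.preimage (Continuous.prodMk_right x)

theorem isOpen_setOf_rel_right (hR : IsOpen {p : M × M | R p.1 p.2}) (x : M) :
    IsOpen {y | R y x} :=
  hR.preimage (Continuous.prodMk_left x)

theorem isOpen_setOf_exists_rel (hR : IsOpen {p : M × M | R p.1 p.2}) (s : Set M) :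
    IsOpen {y | ∃ z ∈ s, R y z} := by
  have h : {y | ∃ z ∈ s, R y z} = ⋃ z ∈ s, {y | R y z} := by ext; simp
  exact h ▸ isOpen_biUnion fun z _ => isOpen_setOf_rel_right hR z

end OpenRelation

theorem Bf_characterizations_general
    {M : Type*} [TopologicalSpace M] (ll : M → M → Prop)
    (htrans : ∀ x y z, ll x y → ll y z → ll x z)
    (hopen : IsOpen {p : M × M | ll p.1 p.2})
    (r : M) :
    let cls : Set M := {y | ll r y} ∩ {y | ll y r}
    let Imc : Set M := {y | ∃ z ∈ cls, ll y z}
    closure cls \ Imc = frontier cls \ Imc ∧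
    frontier cls \ Imc = frontier cls ∩ frontier Imc := by
  intro cls Imc
  have hcls : IsOpen cls := (isOpen_setOf_rel_left hopen r).inter (isOpen_setOf_rel_right hopen r)
  have hsub : cls ⊆ Imc := fun y hy => ⟨y, hy, htrans y r y hy.2 hy.1⟩
  exact ⟨closure_diff_eq_frontier_diff_of_subset hcls hsub,
    frontier_diff_eq_frontier_inter_frontier (isOpen_setOf_exists_rel hopen cls) hsub⟩

/-- For a chronology violating class `[r]`, the sets
`closure [r] \ I⁻([r])`, `∂[r] \ I⁻([r])` and `∂[r] ∩ ∂(I⁻([r]))` coincide. -/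
theorem Bf_characterizations
    {M : Type*} [TopologicalSpace M] (ll : M → M → Prop)
    (htrans : ∀ x y z, ll x y → ll y z → ll x z)
    (hopen : IsOpen {p : M × M | ll p.1 p.2})
    (r : M) (hr : ll r r) :
    let cls : Set M := {y | ll r y} ∩ {y | ll y r}
    let Imc : Set M := {y | ∃ z ∈ cls, ll y z}
    closure cls \ Imc = frontier cls \ Imc ∧
    frontier cls \ Imc = frontier cls ∩ frontier Imc :=
  Bf_characterizations_general ll htrans hopen r
end

section
/- The future boundary B_f([r]) := closure([r]) \ I⁻([r]) of a chronology violating class is achronal: no two of its points are related by ≪. -/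
open Set Topology

theorem exists_mem_rel_of_rel_mem_closure {M : Type*} [TopologicalSpace M] {R : M → M → Prop}
    (hR : IsOpen {p : M × M | R p.1 p.2}) {s : Set M} {x y : M}
    (hy : y ∈ closure s) (hxy : R x y) : ∃ z ∈ s, R x z :=
  mem_closure_iff.mp hy {z | R x z} (hR.preimage (Continuous.prodMk_right x)) hxy
    |>.imp fun _ hz => ⟨hz.2, hz.1⟩

theorem Bf_achronal_general
    {M : Type*} [TopologicalSpace M] (ll : M → M → Prop)
    (hopen : IsOpen {p : M × M | ll p.1 p.2})
    (r : M) :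
    let cls : Set M := {y | ll r y} ∩ {y | ll y r}
    let Bf : Set M := closure cls \ {y | ∃ z ∈ cls, ll y z}
    ∀ x ∈ Bf, ∀ y ∈ Bf, ¬ ll x y := by
  intro cls Bf x hx y hy hxy
  exact hx.2 (exists_mem_rel_of_rel_mem_closure hopen hy.1 hxy)

/-- The future boundary `B_f([r]) = closure [r] \ I⁻([r])` of a chronology
violating class is achronal. -/
theorem Bf_achronal
    {M : Type*} [TopologicalSpace M] (ll : M → M → Prop)
    (htrans : ∀ x y z, ll x y → ll y z → ll x z)
    (hopen : IsOpen {p : M × M | ll p.1 p.2})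
    (r : M) (hr : ll r r) :
    let cls : Set M := {y | ll r y} ∩ {y | ll y r}
    let Bf : Set M := closure cls \ {y | ∃ z ∈ cls, ll y z}
    ∀ x ∈ Bf, ∀ y ∈ Bf, ¬ ll x y :=
  Bf_achronal_general ll hopen r
end

section
/- For a chronology violating class [r], define B_f([r]) = closure([r]) \ I⁻([r]) and B_p([r]) = closure([r]) \ I⁺([r]). Then the boundary of [r] decomposes as ∂[r] = B_p([r]) ∪ B_f([r]). -/
/-!
The class `[r]` is open, so its frontier is `closure [r] \ [r]`. Transitivity of `≪` together with
`r ≪ r` gives `[r] = I⁺([r]) ∩ I⁻([r])`: a point reached from `[r]` and reaching `[r]` satisfies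
`r ≪ p ≪ r`. Removing an intersection from `closure [r]` leaves the union of the two differences.
-/

open Set Topology

section ChronologyClass

variable {M : Type*} (ll : M → M → Prop)

def relFuture (s : Set M) : Set M := {y | ∃ z ∈ s, ll z y}

def relPast (s : Set M) : Set M := {y | ∃ z ∈ s, ll y z}

def chronClass (r : M) : Set M := {y | ll r y} ∩ {y | ll y r}

theorem isOpen_chronClass [TopologicalSpace M] (hopen : IsOpen {p : M × M | ll p.1 p.2})
    (r : M) : IsOpen (chronClass ll r) :=
  (hopen.preimage (Continuous.prodMk_right r)).inter
    (hopen.preimage (continuous_id.prodMk continuous_const))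

theorem chronClass_eq_relFuture_inter_relPast (htrans : ∀ x y z, ll x y → ll y z → ll x z)
    {r : M} (hr : ll r r) :
    chronClass ll r = relFuture ll (chronClass ll r) ∩ relPast ll (chronClass ll r) := by
  have hr_mem : r ∈ chronClass ll r := ⟨hr, hr⟩
  refine Subset.antisymm (fun p hp => ⟨⟨r, hr_mem, hp.1⟩, ⟨r, hr_mem, hp.2⟩⟩) ?_
  rintro p ⟨⟨w, hw, hwp⟩, ⟨z, hz, hpz⟩⟩
  exact ⟨htrans _ _ _ hw.1 hwp, htrans _ _ _ hpz hz.2⟩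

end ChronologyClass

/-- The boundary of a chronology violating class decomposes as
`∂[r] = B_p([r]) ∪ B_f([r])`. -/
theorem frontier_eq_Bp_union_Bf
    {M : Type*} [TopologicalSpace M] (ll : M → M → Prop)
    (htrans : ∀ x y z, ll x y → ll y z → ll x z)
    (hopen : IsOpen {p : M × M | ll p.1 p.2})
    (r : M) (hr : ll r r) :
    let cls : Set M := {y | ll r y} ∩ {y | ll y r}
    let Bf : Set M := closure cls \ {y | ∃ z ∈ cls, ll y z}
    let Bp : Set M := closure cls \ {y | ∃ z ∈ cls, ll z y}
    frontier cls = Bp ∪ Bf := by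
  intro cls Bf Bp
  calc frontier cls = closure cls \ cls := (isOpen_chronClass ll hopen r).frontier_eq
    _ = closure cls \ (relFuture ll cls ∩ relPast ll cls) :=
      congrArg (closure cls \ ·) (chronClass_eq_relFuture_inter_relPast ll htrans hr)
    _ = Bp ∪ Bf := sdiff_inter
end

section
/- For a chronology violating class [r]: I⁺([r]) ∩ ∂[r] ⊆ B_f([r]) and I⁻([r]) ∩ ∂[r] ⊆ B_p([r]). -/
open Set Topology

/-! By transitivity, a point of both `I⁺([r])` and `I⁻([r])` lies in `[r]`; since `[r]` is open,
its frontier misses `[r]`, so a frontier point of `I⁺([r])` cannot lie in `I⁻([r])`, and dually. -/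

namespace Chronology

variable {M : Type*} (ll : M → M → Prop)

def violatingClass (r : M) : Set M := {y | ll r y} ∩ {y | ll y r}

def chronoFuture (S : Set M) : Set M := {y | ∃ z ∈ S, ll z y}

def chronoPast (S : Set M) : Set M := {y | ∃ z ∈ S, ll y z}

variable {ll}

theorem isOpen_violatingClass [TopologicalSpace M]
    (hIplusOpen : ∀ x, IsOpen {y | ll x y}) (hIminusOpen : ∀ x, IsOpen {y | ll y x}) (r : M) :
    IsOpen (violatingClass ll r) :=
  (hIplusOpen r).inter (hIminusOpen r)

theorem chronoFuture_inter_chronoPast_subset (htrans : ∀ x y z, ll x y → ll y z → ll x z)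
    (r : M) :
    chronoFuture ll (violatingClass ll r) ∩ chronoPast ll (violatingClass ll r) ⊆
      violatingClass ll r := by
  rintro y ⟨⟨z, ⟨hrz, -⟩, hzy⟩, ⟨w, ⟨-, hwr⟩, hyw⟩⟩
  exact ⟨htrans r z y hrz hzy, htrans y w r hyw hwr⟩

end Chronology

theorem IsOpen.inter_frontier_subset_closure_diff {X : Type*} [TopologicalSpace X]
    {U A B : Set X} (hU : IsOpen U) (hAB : A ∩ B ⊆ U) :
    A ∩ frontier U ⊆ closure U \ B := by
  rw [hU.frontier_eq]
  rintro y ⟨hyA, hyU, hyU'⟩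
  exact ⟨hyU, fun hyB => hyU' (hAB ⟨hyA, hyB⟩)⟩

theorem Iplus_frontier_subset_Bf_general
    {M : Type*} [TopologicalSpace M] (ll : M → M → Prop)
    (htrans : ∀ x y z, ll x y → ll y z → ll x z)
    (hIplusOpen : ∀ x, IsOpen {y | ll x y})
    (hIminusOpen : ∀ x, IsOpen {y | ll y x})
    (r : M) :
    let cls : Set M := {y | ll r y} ∩ {y | ll y r}
    let Ip : Set M := {y | ∃ z ∈ cls, ll z y}
    let Im : Set M := {y | ∃ z ∈ cls, ll y z}
    let Bf : Set M := closure cls \ Im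
    let Bp : Set M := closure cls \ Ip
    Ip ∩ frontier cls ⊆ Bf ∧ Im ∩ frontier cls ⊆ Bp := by
  intro cls Ip Im Bf Bp
  have hopen : IsOpen cls := Chronology.isOpen_violatingClass hIplusOpen hIminusOpen r
  have hsub : Ip ∩ Im ⊆ cls := Chronology.chronoFuture_inter_chronoPast_subset htrans r
  exact ⟨hopen.inter_frontier_subset_closure_diff hsub,
    hopen.inter_frontier_subset_closure_diff (inter_comm Im Ip ▸ hsub)⟩

/-- For a chronology violating class `[r]`:
`I⁺([r]) ∩ ∂[r] ⊆ B_f([r])` and `I⁻([r]) ∩ ∂[r] ⊆ B_p([r])`. -/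
theorem Iplus_frontier_subset_Bf
    {M : Type*} [TopologicalSpace M] (ll : M → M → Prop)
    (htrans : ∀ x y z, ll x y → ll y z → ll x z)
    (hIplusOpen : ∀ x, IsOpen {y | ll x y})
    (hIminusOpen : ∀ x, IsOpen {y | ll y x})
    (r : M) (hr : ll r r) :
    let cls : Set M := {y | ll r y} ∩ {y | ll y r}
    let Ip : Set M := {y | ∃ z ∈ cls, ll z y}
    let Im : Set M := {y | ∃ z ∈ cls, ll y z}
    let Bf : Set M := closure cls \ Im
    let Bp : Set M := closure cls \ Ip
    Ip ∩ frontier cls ⊆ Bf ∧ Im ∩ frontier cls ⊆ Bp :=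
  Iplus_frontier_subset_Bf_general ll htrans hIplusOpen hIminusOpen r
end

section
/- The identities B_f([r]) ∩ I⁺([r]) = B_f([r]) \ B_p([r]) = ∂I⁻([r]) ∩ I⁺([r]) hold. -/
/-!
`I⁺([r])` and `I⁻([r])` are open, and transitivity gives `[r] = I⁺([r]) ∩ I⁻([r])`. The first
identity is then pure set algebra. For the second, `∂I⁻([r]) = closure I⁻([r]) \ I⁻([r])`, and
inside the open set `I⁺([r])` the closure of `I⁻([r])` agrees with the closure of
`I⁺([r]) ∩ I⁻([r]) = [r]`.
-/

open Set Topology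

section Chronology

variable {M : Type*} (ll : M → M → Prop)

def chronoFuture (S : Set M) : Set M := {y | ∃ z ∈ S, ll z y}

def chronoPast (S : Set M) : Set M := {y | ∃ z ∈ S, ll y z}

def chronoClass (r : M) : Set M := {y | ll r y} ∩ {y | ll y r}

variable {ll}

theorem isOpen_chronoFuture [TopologicalSpace M] (hopen : IsOpen {p : M × M | ll p.1 p.2})
    (S : Set M) : IsOpen (chronoFuture ll S) := by
  have hunion : chronoFuture ll S = ⋃ z ∈ S, (fun y => (z, y)) ⁻¹' {p : M × M | ll p.1 p.2} := by
    ext y; simp [chronoFuture]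
  rw [hunion]
  exact isOpen_biUnion fun z _ => hopen.preimage (by fun_prop)

theorem isOpen_chronoPast [TopologicalSpace M] (hopen : IsOpen {p : M × M | ll p.1 p.2})
    (S : Set M) : IsOpen (chronoPast ll S) := by
  have hunion : chronoPast ll S = ⋃ z ∈ S, (fun y => (y, z)) ⁻¹' {p : M × M | ll p.1 p.2} := by
    ext y; simp [chronoPast]
  rw [hunion]
  exact isOpen_biUnion fun z _ => hopen.preimage (by fun_prop)

theorem chronoFuture_inter_chronoPast_chronoClass (htrans : ∀ x y z, ll x y → ll y z → ll x z)
    (r : M) : chronoFuture ll (chronoClass ll r) ∩ chronoPast ll (chronoClass ll r) =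
      chronoClass ll r := by
  apply Subset.antisymm
  · rintro q ⟨⟨z, hz, hzq⟩, w, hw, hqw⟩
    exact ⟨htrans r z q hz.1 hzq, htrans q w r hqw hw.2⟩
  · intro z hz
    have hzz : ll z z := htrans z r z hz.2 hz.1
    exact ⟨⟨z, hz, hzz⟩, z, hz, hzz⟩

end Chronology

theorem IsOpen.frontier_inter_eq_closure_inter_diff_inter {X : Type*} [TopologicalSpace X]
    {U V : Set X} (hU : IsOpen U) (hV : IsOpen V) :
    frontier V ∩ U = (closure (U ∩ V) \ V) ∩ U := by
  rw [hV.frontier_eq]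
  apply Subset.antisymm
  · rintro x ⟨⟨hxV, hxnV⟩, hxU⟩
    exact ⟨⟨hU.inter_closure ⟨hxU, hxV⟩, hxnV⟩, hxU⟩
  · exact inter_subset_inter_left U
      (sdiff_subset_sdiff_left (closure_mono inter_subset_right))

theorem Bf_inter_Iplus_identities_general
    {M : Type*} [TopologicalSpace M] (ll : M → M → Prop)
    (htrans : ∀ x y z, ll x y → ll y z → ll x z)
    (hopen : IsOpen {p : M × M | ll p.1 p.2})
    (r : M) :
    let cls : Set M := {y | ll r y} ∩ {y | ll y r}
    let Ip : Set M := {y | ∃ z ∈ cls, ll z y}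
    let Im : Set M := {y | ∃ z ∈ cls, ll y z}
    let Bf : Set M := closure cls \ Im
    let Bp : Set M := closure cls \ Ip
    Bf ∩ Ip = Bf \ Bp ∧ Bf \ Bp = frontier Im ∩ Ip := by
  intro cls Ip Im Bf Bp
  have hIp : IsOpen Ip := isOpen_chronoFuture hopen cls
  have hIm : IsOpen Im := isOpen_chronoPast hopen cls
  have hcls : cls = Ip ∩ Im := (chronoFuture_inter_chronoPast_chronoClass htrans r).symm
  have hBf : Bf ∩ Ip = Bf \ Bp := by
    rw [sdiff_sdiff_right, sdiff_eq_empty.2 sdiff_subset, empty_union]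
  refine ⟨hBf, ?_⟩
  rw [← hBf, hIp.frontier_inter_eq_closure_inter_diff_inter hIm, ← hcls]

/-- The identities
`B_f([r]) ∩ I⁺([r]) = B_f([r]) \ B_p([r]) = ∂I⁻([r]) ∩ I⁺([r])` hold. -/
theorem Bf_inter_Iplus_identities
    {M : Type*} [TopologicalSpace M] (ll : M → M → Prop)
    (htrans : ∀ x y z, ll x y → ll y z → ll x z)
    (hopen : IsOpen {p : M × M | ll p.1 p.2})
    (hdense : ∀ p : M, ∀ U ∈ nhds p, ∃ q ∈ U, ll q p)
    (r : M) (hr : ll r r) :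
    let cls : Set M := {y | ll r y} ∩ {y | ll y r}
    let Ip : Set M := {y | ∃ z ∈ cls, ll z y}
    let Im : Set M := {y | ∃ z ∈ cls, ll y z}
    let Bf : Set M := closure cls \ Im
    let Bp : Set M := closure cls \ Ip
    Bf ∩ Ip = Bf \ Bp ∧ Bf \ Bp = frontier Im ∩ Ip :=
  Bf_inter_Iplus_identities_general ll htrans hopen r
end

section
/- If p ∈ B_f([r]) \ B_p([r]) and γ : [-1,0] → M is a timelike curve with γ(0) = p (i.e. γ(s) ≪ γ(t) for s < t and γ is continuous), then there exists ε ∈ (0,1) such that γ((-ε,0)) ⊆ [r]. -/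
/-!
Since `p ∉ B_p([r])`, some `z ∈ [r]` has `z ≪ p`. By continuity `γ` stays in the open set
`I⁺(z)` just before `0`, and there `γ t ≪ p` as well. Any `x` with `z ≪ x ≪ p` lies in `[r]`:
`r ≪ z ≪ x` gives `r ≪ x`, and since `I⁺(x)` is an open neighbourhood of `p ∈ closure [r]` it
contains some `w ∈ [r]`, so `x ≪ w ≪ r`.
-/

open Set Filter Topology

section OpenRelation

variable {M : Type*} [TopologicalSpace M] {R : M → M → Prop}

theorem isOpen_setOf_rel_left_s10 (hR : IsOpen {q : M × M | R q.1 q.2}) (a : M) :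
    IsOpen {y | R a y} :=
  hR.preimage (Continuous.prodMk_right a)

theorem exists_mem_rel_of_rel_of_mem_closure (hR : IsOpen {q : M × M | R q.1 q.2})
    {s : Set M} {x p : M} (hxp : R x p) (hp : p ∈ closure s) : ∃ w ∈ s, R x w :=
  let ⟨w, hxw, hw⟩ := mem_closure_iff.mp hp _ (isOpen_setOf_rel_left_s10 hR x) hxp
  ⟨w, hw, hxw⟩

theorem mem_diamond_of_rel_of_rel (htrans : ∀ x y z, R x y → R y z → R x z)
    (hR : IsOpen {q : M × M | R q.1 q.2})
    {r z x p : M} (hz : z ∈ {y | R r y} ∩ {y | R y r}) (hzx : R z x) (hxp : R x p)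
    (hp : p ∈ closure ({y | R r y} ∩ {y | R y r})) : x ∈ {y | R r y} ∩ {y | R y r} := by
  obtain ⟨w, hw, hxw⟩ := exists_mem_rel_of_rel_of_mem_closure hR hxp hp
  exact ⟨htrans _ _ _ hz.1 hzx, htrans _ _ _ hxw hw.2⟩

end OpenRelation

theorem exists_mem_Ioo_zero_one_forall_Ioo_of_eventually_nhdsLT {P : ℝ → Prop}
    (h : ∀ᶠ t in 𝓝[<] 0, P t) : ∃ ε ∈ Ioo (0 : ℝ) 1, ∀ t ∈ Ioo (-ε) 0, P t := by
  obtain ⟨l, ⟨hl, hl0⟩, hsub⟩ :=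
    (mem_nhdsLT_iff_exists_mem_Ico_Ioo_subset (show (-1 / 2 : ℝ) < 0 by norm_num)).mp h
  exact ⟨-l, ⟨by linarith, by linarith⟩, fun t ht => hsub ⟨by linarith [ht.1], ht.2⟩⟩

theorem timelike_curve_enters_class_general
    {M : Type*} [TopologicalSpace M] (ll : M → M → Prop)
    (htrans : ∀ x y z, ll x y → ll y z → ll x z)
    (hopen : IsOpen {p : M × M | ll p.1 p.2})
    (r : M)
    (cls Bf Bp : Set M)
    (hcls : cls = {y | ll r y} ∩ {y | ll y r})
    (hBf : Bf = closure cls \ {y | ∃ z ∈ cls, ll y z})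
    (hBp : Bp = closure cls \ {y | ∃ z ∈ cls, ll z y})
    (p : M) (hp : p ∈ Bf \ Bp)
    (γ : ℝ → M) (hcont : ContinuousOn γ (Set.Icc (-1) 0))
    (hend : γ 0 = p)
    (htime : ∀ s ∈ Set.Icc (-1:ℝ) 0, ∀ t ∈ Set.Icc (-1:ℝ) 0, s < t → ll (γ s) (γ t)) :
    ∃ ε ∈ Set.Ioo (0:ℝ) 1, ∀ t ∈ Set.Ioo (-ε) (0:ℝ), γ t ∈ cls := by
  subst hcls hBf hBp hend
  obtain ⟨⟨hpcl, -⟩, hpBp⟩ := hp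
  obtain ⟨z, hz, hzp⟩ : ∃ z ∈ {y | ll r y} ∩ {y | ll y r}, ll z (γ 0) := by
    by_contra h
    exact hpBp ⟨hpcl, h⟩
  have h0 : (0 : ℝ) ∈ Icc (-1) 0 := ⟨by norm_num, le_rfl⟩
  have hγ : Tendsto γ (𝓝[<] 0) (𝓝 (γ 0)) :=
    (hcont 0 h0).mono_of_mem_nhdsWithin (Icc_mem_nhdsLT (by norm_num))
  apply exists_mem_Ioo_zero_one_forall_Ioo_of_eventually_nhdsLT
  filter_upwards [hγ ((isOpen_setOf_rel_left_s10 hopen z).mem_nhds hzp),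
    Ioo_mem_nhdsLT (show (-1 : ℝ) < 0 by norm_num)] with t hzt ht
  exact mem_diamond_of_rel_of_rel htrans hopen hz hzt
    (htime t (Ioo_subset_Icc_self ht) 0 h0 ht.2) hpcl

/-- If `p ∈ B_f([r]) \ B_p([r])` and `γ : [-1,0] → M` is a timelike curve with
`γ 0 = p`, then there is `ε ∈ (0,1)` with `γ((-ε,0)) ⊆ [r]`. -/
theorem timelike_curve_enters_class
    {M : Type*} [TopologicalSpace M] (ll : M → M → Prop)
    (htrans : ∀ x y z, ll x y → ll y z → ll x z)
    (hopen : IsOpen {p : M × M | ll p.1 p.2})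
    (r : M) (hr : ll r r)
    (cls Bf Bp : Set M)
    (hcls : cls = {y | ll r y} ∩ {y | ll y r})
    (hBf : Bf = closure cls \ {y | ∃ z ∈ cls, ll y z})
    (hBp : Bp = closure cls \ {y | ∃ z ∈ cls, ll z y})
    (p : M) (hp : p ∈ Bf \ Bp)
    (γ : ℝ → M) (hcont : ContinuousOn γ (Set.Icc (-1) 0))
    (hend : γ 0 = p)
    (htime : ∀ s ∈ Set.Icc (-1:ℝ) 0, ∀ t ∈ Set.Icc (-1:ℝ) 0, s < t → ll (γ s) (γ t)) :
    ∃ ε ∈ Set.Ioo (0:ℝ) 1, ∀ t ∈ Set.Ioo (-ε) (0:ℝ), γ t ∈ cls :=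
  timelike_curve_enters_class_general ll htrans hopen r cls Bf Bp hcls hBf hBp p hp γ hcont hend
    htime
end

section
/- For a chronology violating class [r]: the class [r] is causally convex (if x ≤ y ≤ z with x, z ∈ [r] then y ∈ [r]) and the closure of [r] is chronologically convex (if x ≪ y ≪ z with x, z ∈ closure([r]) then y ∈ [r], in particular y ∈ closure([r])). -/
open Set Topology

/-! Causal convexity is immediate from the two push-up properties. For the closure, openness of `≪`
makes `I⁻(y)` an open neighbourhood of `x`, so it meets `I⁺(r)`; transitivity then gives `r ≪ y`,
and symmetrically `y ≪ r`. -/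

section ChronologyViolatingClass

variable {M : Type*} {ll le : M → M → Prop}

theorem mem_inter_setOf_of_le_of_le
    (hpush₁ : ∀ x y z, ll x y → le y z → ll x z)
    (hpush₂ : ∀ x y z, le x y → ll y z → ll x z) {r x y z : M}
    (hx : x ∈ {w | ll r w} ∩ {w | ll w r}) (hz : z ∈ {w | ll r w} ∩ {w | ll w r})
    (hxy : le x y) (hyz : le y z) : y ∈ {w | ll r w} ∩ {w | ll w r} :=
  ⟨hpush₁ r x y hx.1 hxy, hpush₂ y z r hyz hz.2⟩

variable [TopologicalSpace M]

theorem rel_of_mem_closure_setOf_rel_of_rel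
    (htrans : ∀ x y z, ll x y → ll y z → ll x z) (hopen : IsOpen {p : M × M | ll p.1 p.2})
    {r x y : M} (hx : x ∈ closure {w | ll r w}) (hxy : ll x y) : ll r y := by
  obtain ⟨w, hwy, hrw⟩ :=
    mem_closure_iff.mp hx _ (hopen.preimage (Continuous.prodMk_left y)) hxy
  exact htrans r w y hrw hwy

theorem rel_of_rel_of_mem_closure_setOf_rel
    (htrans : ∀ x y z, ll x y → ll y z → ll x z) (hopen : IsOpen {p : M × M | ll p.1 p.2})
    {r y z : M} (hz : z ∈ closure {w | ll w r}) (hyz : ll y z) : ll y r := by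
  obtain ⟨w, hyw, hwr⟩ :=
    mem_closure_iff.mp hz _ (hopen.preimage (Continuous.prodMk_right y)) hyz
  exact htrans y w r hyw hwr

end ChronologyViolatingClass

theorem class_causally_convex_general
    {M : Type*} [TopologicalSpace M] (ll : M → M → Prop) (le : M → M → Prop)
    (htrans : ∀ x y z, ll x y → ll y z → ll x z)
    (hopen : IsOpen {p : M × M | ll p.1 p.2})
    (hpush₁ : ∀ x y z, ll x y → le y z → ll x z)
    (hpush₂ : ∀ x y z, le x y → ll y z → ll x z)
    (r : M) :
    let cls : Set M := {y | ll r y} ∩ {y | ll y r}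
    (∀ x y z, x ∈ cls → z ∈ cls → le x y → le y z → y ∈ cls) ∧
    (∀ x y z, x ∈ closure cls → z ∈ closure cls → ll x y → ll y z → y ∈ cls) := by
  refine ⟨fun x y z => mem_inter_setOf_of_le_of_le hpush₁ hpush₂, ?_⟩
  intro x y z hx hz hxy hyz
  exact ⟨rel_of_mem_closure_setOf_rel_of_rel htrans hopen
      (closure_mono inter_subset_left hx) hxy,
    rel_of_rel_of_mem_closure_setOf_rel htrans hopen (closure_mono inter_subset_right hz) hyz⟩

/-- A chronology violating class `[r]` is causally convex and its closure is
chronologically convex. -/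
theorem class_causally_convex
    {M : Type*} [TopologicalSpace M] (ll : M → M → Prop) (le : M → M → Prop)
    (htrans : ∀ x y z, ll x y → ll y z → ll x z)
    (hopen : IsOpen {p : M × M | ll p.1 p.2})
    (hrefl : ∀ x, le x x) (hletrans : ∀ x y z, le x y → le y z → le x z)
    (hpush₁ : ∀ x y z, ll x y → le y z → ll x z)
    (hpush₂ : ∀ x y z, le x y → ll y z → ll x z)
    (r : M) (hr : ll r r) :
    let cls : Set M := {y | ll r y} ∩ {y | ll y r}
    (∀ x y z, x ∈ cls → z ∈ cls → le x y → le y z → y ∈ cls) ∧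
    (∀ x y z, x ∈ closure cls → z ∈ closure cls → ll x y → ll y z → y ∈ cls) :=
  class_causally_convex_general ll le htrans hopen hpush₁ hpush₂ r
end
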